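/- arXiv:1207.1255 — 3 statements merged into one kernel-verified Lean document; each statement's English description precedes it below -/
import Mathlib

section
/- Annihilation catch-raise: for every f : X → Y ⊕ E and index i, handling f by re-raising, i.e., tryWith f (Sum.elim (Sum.inr ∘ t i) Sum.inr ∘ c i), equals f. Catching an exception of index i and immediately re-throwing it is the same as doing nothing. -/
def tagE {I : Type} {P : I → Type} (i : I) (a : P i) : (Σ j, P j) := ⟨i, a⟩

def untagE {I : Type} [DecidableEq I] {P : I → Type} (i : I)
    (e : Σ j, P j) : P i ⊕ (Σ j, P j) :=
  if h : e.1 = i then Sum.inl (h ▸ e.2) else Sum.inr e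

def tryWith {X Y E : Type} (f : X → Y ⊕ E) (k : E → Y ⊕ E) : X → Y ⊕ E :=
  Sum.elim Sum.inl k ∘ f

theorem tryWith_inr {X Y E : Type} (f : X → Y ⊕ E) : tryWith f Sum.inr = f := by
  rw [tryWith, Sum.elim_inl_inr, Function.id_comp]

theorem elim_tagE_untagE {I : Type} [DecidableEq I] {P : I → Type} (i : I)
    (e : Σ j, P j) : Sum.elim (tagE i) id (untagE i e) = e := by
  obtain ⟨j, a⟩ := e
  by_cases h : j = i
  · subst h
    simp [untagE, tagE]
  · simp [untagE, h]

theorem annihilation_catch_raise {I : Type} [DecidableEq I] {P : I → Type}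
    {X Y : Type} (f : X → Y ⊕ (Σ j, P j)) (i : I) :
    tryWith f (Sum.elim (Sum.inr ∘ tagE i) Sum.inr ∘ untagE i) = f := by
  have reraise :
      Sum.elim (Sum.inr ∘ tagE i) Sum.inr ∘ untagE i = (Sum.inr : (Σ j, P j) → Y ⊕ _) :=
    calc Sum.elim (Sum.inr ∘ tagE i) Sum.inr ∘ untagE i
        = Sum.inr ∘ (Sum.elim (tagE i) id ∘ untagE i) := by
          rw [← Function.comp_assoc, Sum.comp_elim]; rfl
      _ = Sum.inr := funext fun e => congrArg Sum.inr (elim_tagE_untagE i e)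
  rw [reraise, tryWith_inr]
end

section
/- Commutation catch-catch: for distinct indices i ≠ j, any f : X → Y ⊕ E and handlers g : P i → Y ⊕ E, h : P j → Y ⊕ E, handling f with catch clauses (i ⇒ g, j ⇒ h) equals handling f with catch clauses (j ⇒ h, i ⇒ g). Explicitly, tryWith f (Sum.elim g (Sum.elim h Sum.inr ∘ c j) ∘ c i) = tryWith f (Sum.elim h (Sum.elim g Sum.inr ∘ c i) ∘ c j). -/
section Untag

variable {I : Type} [DecidableEq I] {P : I → Type}

@[simp]
theorem untagE_mk_self (i : I) (a : P i) : untagE i ⟨i, a⟩ = Sum.inl a := by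
  simp [untagE]

theorem untagE_mk_of_ne {l i : I} (a : P l) (hli : l ≠ i) : untagE i ⟨l, a⟩ = Sum.inr ⟨l, a⟩ :=
  dif_neg hli

theorem elim_untagE_comm {Z : Type} {i j : I} (hij : i ≠ j) (g : P i → Z) (h : P j → Z)
    (k : (Σ l, P l) → Z) :
    Sum.elim g (Sum.elim h k ∘ untagE j) ∘ untagE i
      = Sum.elim h (Sum.elim g k ∘ untagE i) ∘ untagE j := by
  funext ⟨l, a⟩
  by_cases hi : l = i
  · subst hi
    simp [untagE_mk_of_ne a hij]
  by_cases hj : l = j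
  · subst hj
    simp [untagE_mk_of_ne a hi]
  · simp [untagE_mk_of_ne a hi, untagE_mk_of_ne a hj]

end Untag

theorem commutation_catch_catch {I : Type} [DecidableEq I] {P : I → Type}
    {X Y : Type} (i j : I) (hij : i ≠ j) (f : X → Y ⊕ (Σ l, P l))
    (g : P i → Y ⊕ (Σ l, P l)) (h : P j → Y ⊕ (Σ l, P l)) :
    tryWith f (Sum.elim g (Sum.elim h Sum.inr ∘ untagE j) ∘ untagE i)
      = tryWith f (Sum.elim h (Sum.elim g Sum.inr ∘ untagE i) ∘ untagE j) := by
  rw [elim_untagE_comm hij]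
end

section
/- First-match semantics of multi-clause handlers: with kₚ defined recursively by k_{n+1} := Sum.inr and kₚ := Sum.elim gₚ k_{p+1} ∘ c iₚ, if e = t (i_q) a for some clause q and q is minimal with this property (i.e., iₚ ≠ i_q for all p < q), then k₁ e = g_q a. -/
def handlerRec {I : Type} [DecidableEq I] {P : I → Type} {Y : Type}
    (n : ℕ) (idx : Fin n → I) (g : ∀ p : Fin n, P (idx p) → Y ⊕ (Σ j, P j))
    (p : ℕ) : (Σ j, P j) → Y ⊕ (Σ j, P j) :=
  if h : p < n then
    Sum.elim (g ⟨p, h⟩) (handlerRec n idx g (p + 1)) ∘ untagE (idx ⟨p, h⟩)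
  else Sum.inr
termination_by n - p

section

variable {I : Type} [DecidableEq I] {P : I → Type} {Y : Type}

theorem untagE_tagE_self (i : I) (a : P i) : untagE i (tagE i a) = Sum.inl a := by
  simp [untagE, tagE]

theorem untagE_of_fst_ne {i : I} {e : Σ j, P j} (h : e.1 ≠ i) : untagE i e = Sum.inr e :=
  dif_neg h

variable {n : ℕ} {idx : Fin n → I} {g : ∀ p : Fin n, P (idx p) → Y ⊕ (Σ j, P j)}

theorem handlerRec_of_lt {p : ℕ} (hp : p < n) (e : Σ j, P j) :
    handlerRec n idx g p e
      = Sum.elim (g ⟨p, hp⟩) (handlerRec n idx g (p + 1)) (untagE (idx ⟨p, hp⟩) e) := by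
  rw [handlerRec, dif_pos hp, Function.comp_apply]

theorem handlerRec_tagE_self (q : Fin n) (a : P (idx q)) :
    handlerRec n idx g q (tagE (idx q) a) = g q a := by
  rw [handlerRec_of_lt q.2, Fin.eta, untagE_tagE_self, Sum.elim_inl]

theorem handlerRec_eq_succ_of_fst_ne {p : ℕ} (hp : p < n) {e : Σ j, P j}
    (he : e.1 ≠ idx ⟨p, hp⟩) : handlerRec n idx g p e = handlerRec n idx g (p + 1) e := by
  rw [handlerRec_of_lt hp, untagE_of_fst_ne he, Sum.elim_inr]

theorem handlerRec_zero_eq_of_forall_fst_ne {k : ℕ} (hk : k ≤ n) {e : Σ j, P j}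
    (he : ∀ r : Fin n, r.1 < k → e.1 ≠ idx r) :
    handlerRec n idx g 0 e = handlerRec n idx g k e := by
  induction k with
  | zero => rfl
  | succ k ih =>
    rw [ih (by omega) fun r hr => he r (by omega),
      handlerRec_eq_succ_of_fst_ne (by omega) (he ⟨k, by omega⟩ (Nat.lt_succ_self k))]

end

theorem first_match_semantics {I : Type} [DecidableEq I] {P : I → Type} {Y : Type}
    (n : ℕ) (idx : Fin n → I) (g : ∀ p : Fin n, P (idx p) → Y ⊕ (Σ j, P j))
    (q : Fin n) (a : P (idx q)) (hmin : ∀ p : Fin n, p < q → idx p ≠ idx q) :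
    handlerRec n idx g 0 (tagE (idx q) a) = g q a := by
  rw [handlerRec_zero_eq_of_forall_fst_ne q.2.le fun r hr => (hmin r hr).symm,
    handlerRec_tagE_self]
end
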